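/- Let τ > 0 and let v : (−τ,τ) → (0,∞) be continuously differentiable with v(0) = v₀ and v'(0) = v̇. Then lim_{t→0} S(v₀, v(t)) / t² = v̇² / ( 4·√( ε²/16 + v₀² ) ), where S is the Sinkhorn divergence between centered one-dimensional Gaussians expressed through the closed-form entropic cost Φ. -/

import Mathlib

open Filter Topology

noncomputable section

/-!
`S(v₀, ·)` vanishes at `v₀` together with its first derivative, so by l'Hôpital
`S(v₀, w)/(w − v₀)²` tends to half its second derivative at `v₀`; composing with the curve,
`(v(t) − v₀)/t → v̇` contributes the factor `v̇²`. The derivatives are explicit because, with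
`κ = 1 + √(1 + u)`, the derivative of `κ − log κ` in `u` is `1/(2κ)`: this gives
`∂_w S(v₀, w) = (4/ε)(w/κ(w,w) − v₀/κ(v₀,w))`, whose derivative at `w = v₀` is
`1/(2√(ε²/16 + v₀²))`.
-/

/-- `κ(v,w) = 1 + √(1 + 16vw/ε²)`. -/
noncomputable def kap (ε v w : ℝ) : ℝ := 1 + Real.sqrt (1 + 16 * v * w / ε ^ 2)

/-- The closed-form entropic optimal transport cost between centered one-dimensional
Gaussians with variances `v, w` (Mallasto–Gerolin–Minh):
`Φ(v,w) = v + w − (ε/2)(κ − log κ + log 2 − 2)`. -/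
noncomputable def PhiG (ε v w : ℝ) : ℝ :=
  v + w - (ε / 2) * (kap ε v w - Real.log (kap ε v w) + Real.log 2 - 2)

/-- The Sinkhorn divergence between centered one-dimensional Gaussians, expressed
through the closed-form entropic cost `Φ`. -/
noncomputable def SG (ε v w : ℝ) : ℝ :=
  PhiG ε v w - (1 / 2) * PhiG ε v v - (1 / 2) * PhiG ε w w

theorem tendsto_div_sub_sq_of_hasDerivAt {f f' : ℝ → ℝ} {a f'' : ℝ}
    (hf : ∀ᶠ x in 𝓝 a, HasDerivAt f (f' x) x) (hfa : f a = 0) (hf'a : f' a = 0)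
    (hf' : HasDerivAt f' f'' a) :
    Tendsto (fun x => f x / (x - a) ^ 2) (𝓝[≠] a) (𝓝 (f'' / 2)) := by
  have hne : ∀ᶠ x in 𝓝[≠] a, x ≠ a := self_mem_nhdsWithin
  refine HasDerivAt.lhopital_zero_nhdsNE (f' := f') (g' := fun x => 2 * (x - a))
    (hf.filter_mono nhdsWithin_le_nhds) ?_ ?_ ?_ ?_ ?_
  · exact Eventually.of_forall fun x => by
      simpa using ((hasDerivAt_id' x).sub_const a).fun_pow 2
  · exact hne.mono fun x hx => mul_ne_zero two_ne_zero (sub_ne_zero.2 hx)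
  · simpa [hfa] using hf.self_of_nhds.continuousAt.tendsto.mono_left nhdsWithin_le_nhds
  · have : Continuous fun x : ℝ => (x - a) ^ 2 := by fun_prop
    simpa using (this.tendsto a).mono_left nhdsWithin_le_nhds
  · refine ((hasDerivAt_iff_tendsto_slope.1 hf').div_const 2).congr' (hne.mono fun x hx => ?_)
    rw [slope_def_field, hf'a, sub_zero]
    field_simp [sub_ne_zero.2 hx]

/-- Extending `F w / (w - a)²` by its limit `L` at `a` gives a function continuous at `a`,
through which `F (v t) / (t - t₀)²` factors as `G (v t) * ((v t - a) / (t - t₀))²`. -/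
theorem Filter.Tendsto.comp_div_sub_sq {F : ℝ → ℝ} {a L : ℝ}
    (hF : Tendsto (fun w => F w / (w - a) ^ 2) (𝓝[≠] a) (𝓝 L)) (hFa : F a = 0)
    {v : ℝ → ℝ} {t₀ d : ℝ} (hv : HasDerivAt v d t₀) (hvt₀ : v t₀ = a) :
    Tendsto (fun t => F (v t) / (t - t₀) ^ 2) (𝓝[≠] t₀) (𝓝 (L * d ^ 2)) := by
  classical
  set G := Function.update (fun w => F w / (w - a) ^ 2) a L
  have hG : Tendsto G (𝓝 a) (𝓝 L) := by
    simpa [ContinuousAt, G] using continuousAt_update_same.2 hF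
  have hv_lim : Tendsto v (𝓝[≠] t₀) (𝓝 a) :=
    hvt₀ ▸ hv.continuousAt.tendsto.mono_left nhdsWithin_le_nhds
  have hslope : Tendsto (fun t => (v t - a) / (t - t₀)) (𝓝[≠] t₀) (𝓝 d) := by
    refine (hasDerivAt_iff_tendsto_slope.1 hv).congr fun t => ?_
    rw [slope_def_field, hvt₀]
  refine ((hG.comp hv_lim).mul (hslope.pow 2)).congr' ?_
  filter_upwards [self_mem_nhdsWithin] with t ht
  have ht : t - t₀ ≠ 0 := sub_ne_zero.2 ht
  by_cases hvt : v t = a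
  · simp [G, hvt, hFa]
  · simp only [Function.comp_apply, G, Function.update_of_ne hvt]
    field_simp [sub_ne_zero.2 hvt]

lemma kap_pos (ε v w : ℝ) : 0 < kap ε v w := by
  unfold kap; positivity

section

variable {ε : ℝ} {p q : ℝ → ℝ} {p' q' x : ℝ}

theorem hasDerivAt_kap (hp : HasDerivAt p p' x) (hq : HasDerivAt q q' x)
    (hx : 0 < 1 + 16 * p x * q x / ε ^ 2) :
    HasDerivAt (fun y => kap ε (p y) (q y))
      (8 * (p' * q x + p x * q') / (ε ^ 2 * √(1 + 16 * p x * q x / ε ^ 2))) x := by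
  have hin : HasDerivAt (fun y => 1 + 16 * p y * q y / ε ^ 2)
      (16 * (p' * q x + p x * q') / ε ^ 2) x := by
    refine ((((hp.const_mul 16).fun_mul hq).div_const (ε ^ 2)).const_add 1).congr_deriv ?_
    ring
  refine ((hin.sqrt hx.ne').const_add 1).congr_deriv ?_
  field_simp
  ring

theorem hasDerivAt_phiG (hε : ε ≠ 0) (hp : HasDerivAt p p' x) (hq : HasDerivAt q q' x)
    (hx : 0 < 1 + 16 * p x * q x / ε ^ 2) :
    HasDerivAt (fun y => PhiG ε (p y) (q y))
      (p' + q' - 4 * (p' * q x + p x * q') / (ε * kap ε (p x) (q x))) x := by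
  have hκ := hasDerivAt_kap hp hq hx
  have hs : 0 < √(1 + 16 * p x * q x / ε ^ 2) := Real.sqrt_pos.2 hx
  refine ((hp.fun_add hq).fun_sub ((((hκ.fun_sub (hκ.log (kap_pos ..).ne')).add_const
    (Real.log 2)).sub_const 2).const_mul (ε / 2))).congr_deriv ?_
  rw [show kap ε (p x) (q x) = 1 + √(1 + 16 * p x * q x / ε ^ 2) from rfl]
  generalize √(1 + 16 * p x * q x / ε ^ 2) = s at hs ⊢
  field_simp
  ring

end

lemma SG_self (ε v : ℝ) : SG ε v v = 0 := by
  unfold SG; ring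

lemma one_add_diag_pos (ε w : ℝ) : 0 < 1 + 16 * w * w / ε ^ 2 := by
  have : 0 ≤ 16 * w * w / ε ^ 2 := div_nonneg (by nlinarith [mul_self_nonneg w]) (sq_nonneg ε)
  linarith

theorem hasDerivAt_SG {ε v w : ℝ} (hε : ε ≠ 0) (hw : 0 < 1 + 16 * v * w / ε ^ 2) :
    HasDerivAt (SG ε v) (4 / ε * (w / kap ε w w - v / kap ε v w)) w := by
  have hvw := hasDerivAt_phiG hε (hasDerivAt_const w v) (hasDerivAt_id' w) hw
  have hww := hasDerivAt_phiG hε (hasDerivAt_id' w) (hasDerivAt_id' w) (one_add_diag_pos ε w)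
  refine ((hvw.sub_const _).fun_sub (hww.const_mul (1 / 2))).congr_deriv ?_
  field_simp
  ring

theorem hasDerivAt_deriv_SG {ε : ℝ} (hε : 0 < ε) (v : ℝ) :
    HasDerivAt (fun w => 4 / ε * (w / kap ε w w - v / kap ε v w))
      (1 / (2 * √(ε ^ 2 / 16 + v ^ 2))) v := by
  have hv := one_add_diag_pos ε v
  have hκ := (kap_pos ε v v).ne'
  have hww := hasDerivAt_kap (hasDerivAt_id' v) (hasDerivAt_id' v) hv
  have hvw := hasDerivAt_kap (hasDerivAt_const v v) (hasDerivAt_id' v) hv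
  refine ((((hasDerivAt_id' v).fun_div hww hκ).fun_sub
    ((hasDerivAt_const v v).fun_div hvw hκ)).const_mul (4 / ε)).congr_deriv ?_
  set s := √(1 + 16 * v * v / ε ^ 2)
  have hs : 0 < s := Real.sqrt_pos.2 hv
  have hs_sq : ε ^ 2 * s ^ 2 = ε ^ 2 + 16 * v ^ 2 := by
    rw [Real.sq_sqrt hv.le]; field_simp
  have hroot : √(ε ^ 2 / 16 + v ^ 2) = ε * s / 4 := by
    rw [Real.sqrt_eq_iff_eq_sq (by positivity) (by positivity)]
    linear_combination (-1 / 16) * hs_sq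
  rw [hroot, show kap ε v v = 1 + s from rfl]
  field_simp
  linear_combination hs_sq

theorem stmt12_general (ε : ℝ) (hε : 0 < ε) (τ : ℝ) (hτ : 0 < τ)
    (v v' : ℝ → ℝ) (v₀ vdot : ℝ)
    (hderiv : ∀ t ∈ Set.Ioo (-τ) τ, HasDerivAt v (v' t) t)
    (h0 : v 0 = v₀) (h0' : v' 0 = vdot) :
    Tendsto (fun t : ℝ => SG ε v₀ (v t) / t ^ 2) (𝓝[≠] 0)
      (𝓝 (vdot ^ 2 / (4 * Real.sqrt (ε ^ 2 / 16 + v₀ ^ 2)))) := by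
  have hv : HasDerivAt v vdot 0 := h0' ▸ hderiv 0 ⟨neg_lt_zero.2 hτ, hτ⟩
  have hκ_arg : ∀ᶠ w in 𝓝 v₀, 0 < 1 + 16 * v₀ * w / ε ^ 2 :=
    (show ContinuousAt (fun w => 1 + 16 * v₀ * w / ε ^ 2) v₀ by fun_prop).eventually
      (lt_mem_nhds (one_add_diag_pos ε v₀))
  have hSG := tendsto_div_sub_sq_of_hasDerivAt
    (hκ_arg.mono fun w hw => hasDerivAt_SG hε.ne' hw) (SG_self ε v₀) (by simp)
    (hasDerivAt_deriv_SG hε v₀)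
  convert hSG.comp_div_sub_sq (SG_self ε v₀) hv h0 using 2
  · rw [sub_zero]
  · field_simp
    ring

/-- **The metric tensor on one-dimensional Gaussians.** If `v : (−τ,τ) → (0,∞)` is
continuously differentiable with `v(0) = v₀` and `v'(0) = v̇`, then
`lim_{t→0} S(v₀, v(t))/t² = v̇²/(4·√(ε²/16 + v₀²))`. -/
theorem stmt12 (ε : ℝ) (hε : 0 < ε) (τ : ℝ) (hτ : 0 < τ)
    (v v' : ℝ → ℝ) (v₀ vdot : ℝ)
    (hpos : ∀ t ∈ Set.Ioo (-τ) τ, 0 < v t)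
    (hderiv : ∀ t ∈ Set.Ioo (-τ) τ, HasDerivAt v (v' t) t)
    (hcont : ContinuousOn v' (Set.Ioo (-τ) τ))
    (h0 : v 0 = v₀) (h0' : v' 0 = vdot) :
    Tendsto (fun t : ℝ => SG ε v₀ (v t) / t ^ 2) (𝓝[≠] 0)
      (𝓝 (vdot ^ 2 / (4 * Real.sqrt (ε ^ 2 / 16 + v₀ ^ 2)))) :=
  stmt12_general ε hε τ hτ v v' v₀ vdot hderiv h0 h0'
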